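/- arXiv:1309.5753 — 8 statements merged into one kernel-verified Lean document; each statement's English description precedes it below -/
import Mathlib

section
/- For every complex z with |z| < 1, the series 1 + ∑_{k=2}^∞ 16^k ( z^{n_k−1} + z_k^{2n_k} · ∑_{ℓ=n_k}^{2n_k} (z/z_k)^ℓ ) converges and its sum equals ∑_{j=0}^∞ c_j z^j. -/
/-!
Grouping the power series `∑ c_j w^j` into the blocks `2^k - 3 ≤ j ≤ 2^(k+1) - 4` gives exactly
the `k`-th term `16^k (w^(n_k - 1) + z_k^(2 n_k) ∑_ℓ (w / z_k)^ℓ)`: the first coefficient of the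
block is `16^k`, and on the rest `c_j w^j = 16^k z_k^(2 n_k) (w / z_k)^j`. Since
`|c_j| ≤ 16^k ≤ (j + 3)^4` on the `k`-th block, the power series converges absolutely on the unit
disc, and an absolutely convergent series may be summed block by block.
-/

open Finset

theorem summable_natCast_add_pow_mul_geometric (b d : ℕ) {r : ℝ} (hr : ‖r‖ < 1) :
    Summable fun n : ℕ => ((n : ℝ) + b) ^ d * r ^ n := by
  simp_rw [add_pow, sum_mul]
  refine summable_sum fun i _ => ?_
  exact ((summable_pow_mul_geometric_of_norm_lt_one i hr).mul_left
    ((b : ℝ) ^ (d - i) * d.choose i)).congr fun n => by ring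

theorem summable_norm_mul_pow_of_norm_le_pow {𝕜 : Type*} [NormedDivisionRing 𝕜] {a : ℕ → 𝕜}
    {w : 𝕜} (hw : ‖w‖ < 1) {b d : ℕ} (ha : ∀ j, ‖a j‖ ≤ ((j : ℝ) + b) ^ d) :
    Summable fun j => ‖a j * w ^ j‖ :=
  (summable_natCast_add_pow_mul_geometric b d (r := ‖w‖) (by rwa [norm_norm])).of_nonneg_of_le
    (fun _ => norm_nonneg _) fun j => by rw [norm_mul, norm_pow]; gcongr; exact ha j

theorem sum_range_sum_Ico_of_monotone {M : Type*} [AddCommGroup M] (f : ℕ → M) {b : ℕ → ℕ}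
    (hb : Monotone b) (N : ℕ) :
    ∑ m ∈ range N, ∑ j ∈ Ico (b m) (b (m + 1)), f j
      = ∑ j ∈ range (b N), f j - ∑ j ∈ range (b 0), f j := by
  simp_rw [sum_Ico_eq_sub f (hb (Nat.le_succ _))]
  exact sum_range_sub (fun m => ∑ j ∈ range (b m), f j) N

theorem HasSum.sum_Ico_of_strictMono {E : Type*} [NormedAddCommGroup E] [CompleteSpace E]
    {f : ℕ → E} {S : E} (hf : HasSum f S) (habs : Summable fun j => ‖f j‖) {b : ℕ → ℕ}
    (hb : StrictMono b) :
    HasSum (fun m => ∑ j ∈ Ico (b m) (b (m + 1)), f j) (S - ∑ j ∈ range (b 0), f j) := by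
  have hblocks : Summable fun m => ∑ j ∈ Ico (b m) (b (m + 1)), f j := by
    refine Summable.of_norm_bounded (g := fun m => ∑ j ∈ Ico (b m) (b (m + 1)), ‖f j‖) ?_
      fun m => norm_sum_le _ _
    refine summable_of_sum_range_le (c := ∑' j, ‖f j‖) (fun m => by positivity) fun N => ?_
    rw [sum_range_sum_Ico_of_monotone _ hb.monotone, sub_le_iff_le_add]
    exact le_add_of_le_of_nonneg (habs.sum_le_tsum _ fun j _ => norm_nonneg _)
      (sum_nonneg fun j _ => norm_nonneg _)
  rw [hblocks.hasSum_iff_tendsto_nat]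
  simp_rw [sum_range_sum_Ico_of_monotone _ hb.monotone]
  exact (hf.tendsto_sum_nat.comp hb.tendsto_atTop).sub_const _

theorem norm_coeff_le_sixteen_pow {z c : ℕ → ℂ} {k j : ℕ} (hzk : ‖z k‖ ≤ 1)
    (hck : c (2 ^ k - 3) = 16 ^ k)
    (hcj : ∀ j, 2 ^ k - 2 ≤ j → j ≤ 2 ^ (k + 1) - 4 → c j = 16 ^ k * z k ^ (2 ^ (k + 1) - 4 - j))
    (hj : 2 ^ k - 3 ≤ j) (hj' : j ≤ 2 ^ (k + 1) - 4) :
    ‖c j‖ ≤ 16 ^ k := by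
  rcases hj.eq_or_lt with rfl | hlt
  · simp [hck]
  · rw [hcj j (by omega) hj', norm_mul, norm_pow, norm_pow, RCLike.norm_ofNat]
    exact mul_le_of_le_one_right (by positivity) (pow_le_one₀ (norm_nonneg _) hzk)

theorem norm_coeff_le {z c : ℕ → ℂ} (hz : ∀ k, 2 ≤ k → ‖z k‖ ≤ 1) (hc0 : c 0 = 1)
    (hck : ∀ k, 2 ≤ k → c (2 ^ k - 3) = 16 ^ k)
    (hcj : ∀ k, 2 ≤ k → ∀ j, 2 ^ k - 2 ≤ j → j ≤ 2 ^ (k + 1) - 4 →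
      c j = 16 ^ k * z k ^ (2 ^ (k + 1) - 4 - j))
    (j : ℕ) : ‖c j‖ ≤ ((j : ℝ) + 3) ^ 4 := by
  rcases Nat.eq_zero_or_pos j with rfl | hj
  · norm_num [hc0]
  -- `j` lies in the block of index `k = log₂ (j + 3)`
  set k := Nat.log 2 (j + 3)
  have hk : 2 ≤ k := (Nat.le_log_iff_pow_le (by norm_num) (by omega)).mpr (by omega)
  have hlow : 2 ^ k ≤ j + 3 := Nat.pow_log_le_self 2 (by omega)
  have hhigh : j + 3 < 2 ^ (k + 1) := Nat.lt_pow_succ_log_self (by norm_num) _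
  calc ‖c j‖ ≤ 16 ^ k :=
        norm_coeff_le_sixteen_pow (hz k hk) (hck k hk) (hcj k hk) (by omega) (by omega)
    _ = ((2 ^ k : ℕ) : ℝ) ^ 4 := by push_cast; rw [← pow_mul, mul_comm, pow_mul]; norm_num
    _ ≤ ((j : ℝ) + 3) ^ 4 := by gcongr; exact_mod_cast hlow

theorem sum_Ico_coeff_mul_pow {c : ℕ → ℂ} {ζ : ℂ} (hζ : ζ ≠ 0) (w : ℂ) {k : ℕ} (hk : 2 ≤ k)
    (hck : c (2 ^ k - 3) = 16 ^ k)
    (hcj : ∀ j, 2 ^ k - 2 ≤ j → j ≤ 2 ^ (k + 1) - 4 → c j = 16 ^ k * ζ ^ (2 ^ (k + 1) - 4 - j)) :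
    ∑ j ∈ Ico (2 ^ k - 3) (2 ^ (k + 1) - 3), c j * w ^ j
      = 16 ^ k * (w ^ (2 ^ k - 2 - 1) +
          ζ ^ (2 * (2 ^ k - 2)) * ∑ l ∈ Icc (2 ^ k - 2) (2 * (2 ^ k - 2)), (w / ζ) ^ l) := by
  have h4 : 4 ≤ 2 ^ k := by
    calc 4 = 2 ^ 2 := by norm_num
      _ ≤ 2 ^ k := Nat.pow_le_pow_right (by norm_num) hk
  have hN : 2 ^ (k + 1) - 4 = 2 * (2 ^ k - 2) := by rw [pow_succ]; omega
  rw [sum_eq_sum_Ico_succ_bot (by omega), show 2 ^ k - 3 + 1 = 2 ^ k - 2 by omega,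
    show 2 ^ (k + 1) - 3 = 2 * (2 ^ k - 2) + 1 by omega, Ico_add_one_right_eq_Icc, mul_add,
    mul_sum, mul_sum, hck, show 2 ^ k - 2 - 1 = 2 ^ k - 3 by omega]
  congr 1
  refine sum_congr rfl fun l hl => ?_
  rw [mem_Icc] at hl
  rw [hcj l hl.1 (by omega), hN, div_pow, pow_sub₀ ζ hζ hl.2]
  field_simp

/-- For every `z` with `|z| < 1`, the series
`1 + ∑_{k≥2} 16^k (z^(n_k−1) + z_k^(2 n_k) ∑_{ℓ=n_k}^{2 n_k} (z/z_k)^ℓ)`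
(with `n_k = 2^k − 2`) converges and its sum equals `∑_{j≥0} c_j z^j`. -/
theorem stmt_2 (z c : ℕ → ℂ)
    (hz : ∀ k, 2 ≤ k → 0 < ‖z k‖ ∧ ‖z k‖ < 1 / 3)
    (hc0 : c 0 = 1)
    (hck : ∀ k, 2 ≤ k → c (2 ^ k - 3) = 16 ^ k)
    (hcj : ∀ k, 2 ≤ k → ∀ j, 2 ^ k - 2 ≤ j → j ≤ 2 ^ (k + 1) - 4 →
      c j = 16 ^ k * z k ^ (2 ^ (k + 1) - 4 - j)) :
    ∀ w : ℂ, ‖w‖ < 1 →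
      ∃ S : ℂ, HasSum (fun j : ℕ => c j * w ^ j) S ∧
        HasSum (fun k : ℕ =>
          (16 : ℂ) ^ (k + 2) *
            (w ^ (2 ^ (k + 2) - 2 - 1) +
              z (k + 2) ^ (2 * (2 ^ (k + 2) - 2)) *
                ∑ l ∈ Finset.Icc (2 ^ (k + 2) - 2) (2 * (2 ^ (k + 2) - 2)),
                  (w / z (k + 2)) ^ l))
          (S - 1) := by
  intro w hw
  have habs : Summable fun j => ‖c j * w ^ j‖ :=
    summable_norm_mul_pow_of_norm_le_pow hw
      (norm_coeff_le (fun k hk => ((hz k hk).2.trans (by norm_num)).le) hc0 hck hcj)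
  have hb : StrictMono fun m : ℕ => 2 ^ (m + 2) - 3 := fun m n hmn => by
    have h4 : 2 ^ 2 ≤ 2 ^ (m + 2) := Nat.pow_le_pow_right (by norm_num) (by omega)
    have := Nat.pow_lt_pow_right (a := 2) (by norm_num) (by omega : m + 2 < n + 2)
    dsimp only
    omega
  have hsum := habs.of_norm.hasSum.sum_Ico_of_strictMono habs hb
  have hfirst : ∑ j ∈ range (2 ^ (0 + 2) - 3), c j * w ^ j = 1 := by norm_num [hc0]
  rw [hfirst] at hsum
  refine ⟨_, habs.of_norm.hasSum, hsum.congr_fun fun m => ?_⟩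
  exact (sum_Ico_coeff_mul_pow (norm_pos_iff.mp (hz (m + 2) (by omega)).1) w (by omega)
    (hck (m + 2) (by omega)) (hcj (m + 2) (by omega))).symm
end

section
/- Fix an integer k ≥ 2. The polynomial P_{n_k} has degree at most n_k, and every coefficient of order ≤ 2n_k of the formal power series Q·C − P_{n_k} vanishes, where C = ∑_{j=0}^∞ c_j X^j is the formal power series with coefficients c_j and Q(X) = 1 − X/z_k. In other words, Q and P_{n_k} realize the (n_k, n_k) Padé accuracy-through-order condition f − P_{n_k}/Q = O(z^{2n_k+1}). -/
open Polynomial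

/-!
The `j`-th summand of `P_{n_k}` is `16^j` times the block `c_{n_j - 1} X^{n_j - 1} + ⋯ + c_{2 n_j} X^{2 n_j}`
of `C`, and these blocks tile `ℕ`, so the bracket in `P_{n_k}` is the truncation of `C` below degree
`n_k - 1`. Multiplying the `k`-th block by `Q = 1 - X/z_k` telescopes to the last summand of
`P_{n_k}` minus `16^k z_k⁻¹ X^{2 n_k + 1}`. Hence `P_{n_k} = Q · trunc_{2 n_k + 1} C + 16^k z_k⁻¹ X^{2 n_k + 1}`,
so `X^{2 n_k + 1}` divides `Q·C - P_{n_k}`; the degree bound is read off the original form of `P_{n_k}`.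
-/

lemma PowerSeries.trunc_mk_add_sum_Ico {R : Type*} [CommSemiring R] (c : ℕ → R) {m n : ℕ}
    (h : m ≤ n) :
    trunc m (mk c) + ∑ i ∈ Finset.Ico m n, Polynomial.monomial i (c i) = trunc n (mk c) := by
  simp only [trunc_apply, coeff_mk]
  rw [Finset.sum_Ico_consecutive _ (Nat.zero_le m) h]

lemma PowerSeries.coeff_coe_mul_sub_eq_zero {R : Type*} [CommRing R] {f : PowerSeries R}
    {P Q S : R[X]} {n i : ℕ} (hP : P = Q * trunc n f + Polynomial.X ^ n * S) (hi : i < n) :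
    coeff i ((Q : PowerSeries R) * f - (P : PowerSeries R)) = 0 := by
  have hdvd : X ^ n ∣ (Q : PowerSeries R) * f - (P : PowerSeries R) := by
    rw [hP, Polynomial.coe_add, Polynomial.coe_mul, Polynomial.coe_mul, Polynomial.coe_pow,
      Polynomial.coe_X]
    nth_rw 1 [eq_X_pow_mul_shift_add_trunc n f]
    exact ⟨Q * mk (fun i ↦ coeff (i + n) f) - S, by ring⟩
  exact X_pow_dvd_iff.mp hdvd i hi

lemma Polynomial.degree_trunc_mul_one_sub_add_le {R : Type*} [CommRing R] (f : PowerSeries R)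
    (a b d : R) (N : ℕ) :
    (PowerSeries.trunc (N - 1) f * (1 - C a * X) +
      C b * (X ^ (N - 1) - C a * X ^ N + C d * X ^ N)).degree ≤ (N : WithBot ℕ) := by
  refine degree_le_of_natDegree_le (natDegree_add_le_of_degree_le ?_ (by compute_degree!))
  rcases Nat.lt_or_ge N 2 with hN | hN
  · rw [show N - 1 = 0 by omega, PowerSeries.trunc_zero', zero_mul, natDegree_zero]
    exact Nat.zero_le N
  have htrunc : (PowerSeries.trunc (N - 1) f).natDegree ≤ N - 2 := by
    rw [show N - 1 = N - 2 + 1 by omega]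
    exact Nat.lt_succ_iff.mp (PowerSeries.natDegree_trunc_lt _ _)
  have hQ : (1 - C a * X : R[X]).natDegree ≤ 1 := by compute_degree!
  exact (natDegree_mul_le_of_le htrunc hQ).trans (by omega)

section

variable {K : Type*} [Field K]

/-- The `j`-th summand of the bracket in `P_{n_k}`, without its factor `16^j`, for `w = z_j`, `N = n_j`. -/
noncomputable def padeBlock (w : K) (N : ℕ) : K[X] :=
  X ^ (N - 1) + C (w ^ (2 * N)) * ∑ l ∈ Finset.Icc N (2 * N), C (w⁻¹ ^ l) * X ^ l

lemma one_sub_C_inv_mul_X_mul_padeBlock {w : K} (hw : w ≠ 0) {N : ℕ} (hN : 1 ≤ N) :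
    (1 - C w⁻¹ * X) * padeBlock w N =
      X ^ (N - 1) - C w⁻¹ * X ^ N + C (w ^ N) * X ^ N - C w⁻¹ * X ^ (2 * N + 1) := by
  have hgeom : (1 - C w⁻¹ * X) * ∑ l ∈ Finset.Icc N (2 * N), C (w⁻¹ ^ l) * X ^ l =
      C (w⁻¹ ^ N) * X ^ N - C (w⁻¹ ^ (2 * N + 1)) * X ^ (2 * N + 1) := by
    simp only [C_pow, ← mul_pow, ← Finset.Ico_add_one_right_eq_Icc]
    rw [mul_comm, geom_sum_Ico_mul_neg _ (by omega)]
  have hX : X * X ^ (N - 1) = (X ^ N : K[X]) := by rw [← pow_succ', Nat.sub_add_cancel hN]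
  have h₁ : w ^ (2 * N) * w⁻¹ ^ N = w ^ N := by
    rw [two_mul, pow_add, inv_pow, mul_inv_cancel_right₀ (pow_ne_zero _ hw)]
  have h₂ : w ^ (2 * N) * w⁻¹ ^ (2 * N + 1) = w⁻¹ := by
    rw [pow_succ, inv_pow, ← mul_assoc, mul_inv_cancel₀ (pow_ne_zero _ hw), one_mul]
  rw [padeBlock, mul_add, mul_left_comm, hgeom, sub_mul, one_mul, mul_assoc, hX, mul_sub,
    ← mul_assoc, ← mul_assoc, ← C_mul, ← C_mul, h₁, h₂]
  ring

lemma padeBlock_eq_sum_Icc {w : K} (hw : w ≠ 0) (N : ℕ) :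
    padeBlock w N = X ^ (N - 1) + ∑ l ∈ Finset.Icc N (2 * N), C (w ^ (2 * N - l)) * X ^ l := by
  rw [padeBlock, Finset.mul_sum]
  congr 1
  refine Finset.sum_congr rfl fun l hl => ?_
  rw [← mul_assoc, ← C_mul, inv_pow, ← div_eq_mul_inv, pow_sub₀ _ hw (Finset.mem_Icc.mp hl).2,
    div_eq_mul_inv]

lemma C_mul_padeBlock_eq_sum_Ico {c : ℕ → K} {a w : K} (hw : w ≠ 0) {N : ℕ} (hN : 1 ≤ N)
    (hc : c (N - 1) = a) (hcl : ∀ l, N ≤ l → l ≤ 2 * N → c l = a * w ^ (2 * N - l)) :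
    C a * padeBlock w N = ∑ i ∈ Finset.Ico (N - 1) (2 * N + 1), monomial i (c i) := by
  rw [Finset.sum_eq_sum_Ico_succ_bot (by omega), Nat.sub_add_cancel hN,
    Finset.Ico_add_one_right_eq_Icc, padeBlock_eq_sum_Icc hw, mul_add, Finset.mul_sum, hc,
    C_mul_X_pow_eq_monomial]
  congr 1
  refine Finset.sum_congr rfl fun l hl => ?_
  obtain ⟨hl₁, hl₂⟩ := Finset.mem_Icc.mp hl
  rw [hcl l hl₁ hl₂, ← mul_assoc, ← C_mul, C_mul_X_pow_eq_monomial]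

lemma PowerSeries.trunc_mk_mul_one_sub_add_eq {c : ℕ → K} {a w : K} (hw : w ≠ 0) {N : ℕ}
    (hN : 1 ≤ N) (hc : c (N - 1) = a) (hcl : ∀ l, N ≤ l → l ≤ 2 * N → c l = a * w ^ (2 * N - l)) :
    trunc (N - 1) (mk c) * (1 - Polynomial.C w⁻¹ * Polynomial.X) +
        Polynomial.C a * (Polynomial.X ^ (N - 1) - Polynomial.C w⁻¹ * Polynomial.X ^ N +
          Polynomial.C (w ^ N) * Polynomial.X ^ N) =
      (1 - Polynomial.C w⁻¹ * Polynomial.X) * trunc (2 * N + 1) (mk c) +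
        Polynomial.X ^ (2 * N + 1) * Polynomial.C (a * w⁻¹) := by
  rw [← trunc_mk_add_sum_Ico c (by omega : N - 1 ≤ 2 * N + 1),
    ← C_mul_padeBlock_eq_sum_Ico hw hN hc hcl, Polynomial.C_mul]
  linear_combination (-Polynomial.C a) * one_sub_C_inv_mul_X_mul_padeBlock hw hN

lemma one_add_sum_C_mul_padeBlock_eq_trunc (z c a : ℕ → K)
    (hz : ∀ j, 2 ≤ j → z j ≠ 0) (hc0 : c 0 = 1)
    (hca : ∀ j, 2 ≤ j → c (2 ^ j - 2 - 1) = a j)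
    (hcz : ∀ j, 2 ≤ j → ∀ l, 2 ^ j - 2 ≤ l → l ≤ 2 * (2 ^ j - 2) →
      c l = a j * z j ^ (2 * (2 ^ j - 2) - l))
    (m : ℕ) (hm : 1 ≤ m) :
    1 + ∑ j ∈ Finset.Icc 2 m, C (a j) * padeBlock (z j) (2 ^ j - 2) =
      PowerSeries.trunc (2 ^ (m + 1) - 3) (PowerSeries.mk c) := by
  induction m, hm using Nat.le_induction with
  | base => simp [PowerSeries.trunc_one_left, hc0]
  | succ m hm ih =>
    have h4 : 4 ≤ 2 ^ (m + 1) := by simpa using Nat.pow_le_pow_right two_pos (by omega : 2 ≤ m + 1)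
    have hsucc : 2 ^ (m + 1 + 1) = 2 * 2 ^ (m + 1) := pow_succ' 2 (m + 1)
    rw [Finset.sum_Icc_succ_top (by omega), ← add_assoc, ih,
      C_mul_padeBlock_eq_sum_Ico (hz _ (by omega)) (by omega) (hca _ (by omega)) (hcz _ (by omega)),
      show 2 ^ (m + 1) - 2 - 1 = 2 ^ (m + 1) - 3 by omega,
      show 2 * (2 ^ (m + 1) - 2) + 1 = 2 ^ (m + 1 + 1) - 3 by omega,
      PowerSeries.trunc_mk_add_sum_Ico _ (by omega)]

end

/-- For fixed `k ≥ 2`, the polynomial `P_{n_k}` has degree at most `n_k`, and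
every coefficient of order `≤ 2 n_k` of the formal power series `Q·C − P_{n_k}` vanishes,
where `C = ∑ c_j X^j` and `Q(X) = 1 − X/z_k`: the `(n_k, n_k)` Padé
accuracy-through-order condition. -/
theorem stmt_3 (z c : ℕ → ℂ)
    (hz : ∀ k, 2 ≤ k → 0 < ‖z k‖ ∧ ‖z k‖ < 1 / 3)
    (hc0 : c 0 = 1)
    (hck : ∀ k, 2 ≤ k → c (2 ^ k - 3) = 16 ^ k)
    (hcj : ∀ k, 2 ≤ k → ∀ j, 2 ^ k - 2 ≤ j → j ≤ 2 ^ (k + 1) - 4 →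
      c j = 16 ^ k * z k ^ (2 ^ (k + 1) - 4 - j))
    (k : ℕ) (hk : 2 ≤ k)
    (n : ℕ → ℕ) (hn : ∀ j, n j = 2 ^ j - 2)
    (P Q : Polynomial ℂ)
    (hP : P = (1 + ∑ j ∈ Finset.Icc 2 (k - 1), Polynomial.C ((16 : ℂ) ^ j) *
          (X ^ (n j - 1) + Polynomial.C (z j ^ (2 * n j)) *
            ∑ l ∈ Finset.Icc (n j) (2 * n j), Polynomial.C ((z j)⁻¹ ^ l) * X ^ l)) *
        (1 - Polynomial.C (z k)⁻¹ * X) +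
      Polynomial.C ((16 : ℂ) ^ k) *
        (X ^ (n k - 1) - Polynomial.C (z k)⁻¹ * X ^ n k +
          Polynomial.C (z k ^ n k) * X ^ n k))
    (hQ : Q = 1 - Polynomial.C (z k)⁻¹ * X) :
    P.degree ≤ (n k : WithBot ℕ) ∧
      ∀ i : ℕ, i ≤ 2 * n k →
        PowerSeries.coeff i
          ((Q : PowerSeries ℂ) * PowerSeries.mk c - (P : PowerSeries ℂ)) = 0 := by
  have hz0 : ∀ j, 2 ≤ j → z j ≠ 0 := fun j hj => norm_pos_iff.mp (hz j hj).1
  have hca : ∀ j, 2 ≤ j → c (2 ^ j - 2 - 1) = 16 ^ j :=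
    fun j hj => (congrArg c (by omega)).trans (hck j hj)
  have hcz : ∀ j, 2 ≤ j → ∀ l, 2 ^ j - 2 ≤ l → l ≤ 2 * (2 ^ j - 2) →
      c l = 16 ^ j * z j ^ (2 * (2 ^ j - 2) - l) := by
    intro j hj l hl₁ hl₂
    have hsucc : 2 ^ (j + 1) = 2 * 2 ^ j := pow_succ' 2 j
    rw [hcj j hj l hl₁ (by omega), show 2 ^ (j + 1) - 4 - l = 2 * (2 ^ j - 2) - l by omega]
  have h4 : 4 ≤ 2 ^ k := by simpa using Nat.pow_le_pow_right two_pos hk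
  have hlow := one_add_sum_C_mul_padeBlock_eq_trunc z c (fun j => (16 : ℂ) ^ j) hz0 hc0 hca hcz
    (k - 1) (by omega)
  simp only [hn] at hP ⊢
  set N := 2 ^ k - 2
  rw [Nat.sub_add_cancel (by omega : 1 ≤ k), show 2 ^ k - 3 = N - 1 by omega] at hlow
  have hP' : P = PowerSeries.trunc (N - 1) (PowerSeries.mk c) * Q + C ((16 : ℂ) ^ k) *
      (X ^ (N - 1) - C (z k)⁻¹ * X ^ N + C (z k ^ N) * X ^ N) := by
    rw [hQ, ← hlow]
    exact hP
  have hpade : P = Q * PowerSeries.trunc (2 * N + 1) (PowerSeries.mk c) +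
      X ^ (2 * N + 1) * C ((16 : ℂ) ^ k * (z k)⁻¹) := by
    rw [hP', hQ]
    exact PowerSeries.trunc_mk_mul_one_sub_add_eq (hz0 k hk) (by omega) (hca k hk) (hcz k hk)
  refine ⟨?_, fun i hi => PowerSeries.coeff_coe_mul_sub_eq_zero hpade (by omega)⟩
  rw [hP', hQ]
  exact Polynomial.degree_trunc_mul_one_sub_add_le _ _ _ _ N
end

section
/- Fix an integer k ≥ 2. The polynomial P_{n_k} satisfies P_{n_k}(z_k) = 16^k · z_k^{2n_k}, and in particular P_{n_k}(z_k) ≠ 0. -/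
open Polynomial

section

variable {K : Type*} [Field K] {z : K}

theorem eval_one_sub_C_inv_mul_X_self (hz : z ≠ 0) : (1 - C z⁻¹ * X).eval z = 0 := by
  simp [inv_mul_cancel₀ hz]

theorem eval_X_pow_pred_sub_add_self {n : ℕ} (hz : z ≠ 0) (hn : n ≠ 0) :
    (X ^ (n - 1) - C z⁻¹ * X ^ n + C (z ^ n) * X ^ n).eval z = z ^ (2 * n) := by
  obtain ⟨m, rfl⟩ := Nat.exists_eq_succ_of_ne_zero hn
  simp only [eval_add, eval_sub, eval_mul, eval_C, eval_pow, eval_X, Nat.succ_sub_one]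
  rw [pow_succ z m, mul_left_comm, inv_mul_cancel₀ hz, mul_one, sub_self, zero_add, ← pow_succ,
    ← pow_add, two_mul]

end

theorem stmt_4_general (z : ℕ → ℂ)
    (hz : ∀ k, 2 ≤ k → 0 < ‖z k‖ ∧ ‖z k‖ < 1 / 3)
    (k : ℕ) (hk : 2 ≤ k)
    (n : ℕ → ℕ) (hn : ∀ j, n j = 2 ^ j - 2)
    (P : Polynomial ℂ)
    (hP : P = (1 + ∑ j ∈ Finset.Icc 2 (k - 1), Polynomial.C ((16 : ℂ) ^ j) *
          (X ^ (n j - 1) + Polynomial.C (z j ^ (2 * n j)) *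
            ∑ l ∈ Finset.Icc (n j) (2 * n j), Polynomial.C ((z j)⁻¹ ^ l) * X ^ l)) *
        (1 - Polynomial.C (z k)⁻¹ * X) +
      Polynomial.C ((16 : ℂ) ^ k) *
        (X ^ (n k - 1) - Polynomial.C (z k)⁻¹ * X ^ n k +
          Polynomial.C (z k ^ n k) * X ^ n k)) :
    P.eval (z k) = 16 ^ k * z k ^ (2 * n k) ∧ P.eval (z k) ≠ 0 := by
  have hz0 : z k ≠ 0 := norm_pos_iff.mp (hz k hk).1
  have hnk : n k ≠ 0 := by
    have : 2 ^ 2 ≤ 2 ^ k := Nat.pow_le_pow_right two_pos hk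
    have := hn k
    omega
  have heval : P.eval (z k) = 16 ^ k * z k ^ (2 * n k) := by
    rw [hP, eval_add, eval_mul, eval_mul, eval_C, eval_one_sub_C_inv_mul_X_self hz0,
      eval_X_pow_pred_sub_add_self hz0 hnk, mul_zero, zero_add]
  exact ⟨heval, heval ▸ mul_ne_zero (pow_ne_zero _ (by norm_num)) (pow_ne_zero _ hz0)⟩

/-- For fixed `k ≥ 2`, the polynomial `P_{n_k}` satisfies
`P_{n_k}(z_k) = 16^k · z_k^(2 n_k)`, and in particular `P_{n_k}(z_k) ≠ 0`. -/
theorem stmt_4 (z c : ℕ → ℂ)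
    (hz : ∀ k, 2 ≤ k → 0 < ‖z k‖ ∧ ‖z k‖ < 1 / 3)
    (hc0 : c 0 = 1)
    (hck : ∀ k, 2 ≤ k → c (2 ^ k - 3) = 16 ^ k)
    (hcj : ∀ k, 2 ≤ k → ∀ j, 2 ^ k - 2 ≤ j → j ≤ 2 ^ (k + 1) - 4 →
      c j = 16 ^ k * z k ^ (2 ^ (k + 1) - 4 - j))
    (k : ℕ) (hk : 2 ≤ k)
    (n : ℕ → ℕ) (hn : ∀ j, n j = 2 ^ j - 2)
    (P : Polynomial ℂ)
    (hP : P = (1 + ∑ j ∈ Finset.Icc 2 (k - 1), Polynomial.C ((16 : ℂ) ^ j) *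
          (X ^ (n j - 1) + Polynomial.C (z j ^ (2 * n j)) *
            ∑ l ∈ Finset.Icc (n j) (2 * n j), Polynomial.C ((z j)⁻¹ ^ l) * X ^ l)) *
        (1 - Polynomial.C (z k)⁻¹ * X) +
      Polynomial.C ((16 : ℂ) ^ k) *
        (X ^ (n k - 1) - Polynomial.C (z k)⁻¹ * X ^ n k +
          Polynomial.C (z k ^ n k) * X ^ n k)) :
    P.eval (z k) = 16 ^ k * z k ^ (2 * n k) ∧ P.eval (z k) ≠ 0 :=
  stmt_4_general z hz k hk n hn P hP
end

section
/- Fix an integer k ≥ 2. The polynomials P_{n_k} and Q(X) = 1 − X/z_k are coprime in ℂ[X]; consequently the rational function P_{n_k}/Q has a genuine (spurious) pole at z = z_k, since Q(z_k) = 0 while P_{n_k}(z_k) ≠ 0. -/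
/-!
`Q` is a unit multiple of `X - z_k`, so coprimality reduces to `P(z_k) ≠ 0`. At `z_k` both `Q` and
`X^(n_k-1) - X^(n_k)/z_k` vanish, leaving `P(z_k) = 16^k z_k^(2 n_k)`.
-/

open Polynomial

namespace Polynomial

variable {K : Type*} [Field K] {r : K}

theorem one_sub_C_inv_mul_X_eq (hr : r ≠ 0) :
    (1 - C r⁻¹ * X : K[X]) = C (-r⁻¹) * (X - C r) := by
  rw [mul_sub, ← C_mul, neg_mul, inv_mul_cancel₀ hr, C_neg, C_neg, map_one]
  ring

theorem isRoot_one_sub_C_inv_mul_X (hr : r ≠ 0) : (1 - C r⁻¹ * X : K[X]).IsRoot r := by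
  simp [inv_mul_cancel₀ hr]

theorem isCoprime_one_sub_C_inv_mul_X (hr : r ≠ 0) {p : K[X]} (hp : ¬p.IsRoot r) :
    IsCoprime p (1 - C r⁻¹ * X) := by
  have hunit : IsUnit (C (-r⁻¹) : K[X]) := isUnit_C.mpr (by simpa using hr)
  rw [one_sub_C_inv_mul_X_eq hr, isCoprime_mul_unit_left_right hunit, isCoprime_comm,
    (irreducible_X_sub_C r).coprime_iff_not_dvd, dvd_iff_isRoot]
  exact hp

theorem isRoot_X_pow_pred_sub_C_inv_mul_X_pow (hr : r ≠ 0) {m : ℕ} (hm : m ≠ 0) :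
    (X ^ (m - 1) - C r⁻¹ * X ^ m : K[X]).IsRoot r := by
  obtain ⟨m, rfl⟩ := Nat.exists_eq_succ_of_ne_zero hm
  simp [pow_succ', ← mul_assoc, inv_mul_cancel₀ hr]

end Polynomial

theorem stmt_5_general (z : ℕ → ℂ)
    (hz : ∀ k, 2 ≤ k → 0 < ‖z k‖ ∧ ‖z k‖ < 1 / 3)
    (k : ℕ) (hk : 2 ≤ k)
    (n : ℕ → ℕ) (hn : ∀ j, n j = 2 ^ j - 2)
    (P Q : Polynomial ℂ)
    (hP : P = (1 + ∑ j ∈ Finset.Icc 2 (k - 1), Polynomial.C ((16 : ℂ) ^ j) *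
          (X ^ (n j - 1) + Polynomial.C (z j ^ (2 * n j)) *
            ∑ l ∈ Finset.Icc (n j) (2 * n j), Polynomial.C ((z j)⁻¹ ^ l) * X ^ l)) *
        (1 - Polynomial.C (z k)⁻¹ * X) +
      Polynomial.C ((16 : ℂ) ^ k) *
        (X ^ (n k - 1) - Polynomial.C (z k)⁻¹ * X ^ n k +
          Polynomial.C (z k ^ n k) * X ^ n k))
    (hQ : Q = 1 - Polynomial.C (z k)⁻¹ * X) :
    IsCoprime P Q ∧ Q.eval (z k) = 0 ∧ P.eval (z k) ≠ 0 := by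
  have hzk : z k ≠ 0 := norm_pos_iff.mp (hz k hk).1
  have hnk : n k ≠ 0 := by
    have := Nat.pow_le_pow_right two_pos hk
    rw [hn]
    omega
  have hPz : P.eval (z k) = 16 ^ k * (z k ^ n k * z k ^ n k) := by
    simp only [hP, eval_add, eval_mul, (isRoot_one_sub_C_inv_mul_X hzk).eq_zero,
      (isRoot_X_pow_pred_sub_C_inv_mul_X_pow hzk hnk).eq_zero, eval_C, eval_pow, eval_X]
    ring
  have hPne : P.eval (z k) ≠ 0 := by
    rw [hPz]
    exact mul_ne_zero (by norm_num) (mul_ne_zero (pow_ne_zero _ hzk) (pow_ne_zero _ hzk))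
  subst hQ
  exact ⟨isCoprime_one_sub_C_inv_mul_X hzk hPne, isRoot_one_sub_C_inv_mul_X hzk, hPne⟩

/-- For fixed `k ≥ 2`, the polynomials `P_{n_k}` and `Q(X) = 1 − X/z_k` are
coprime in `ℂ[X]`; consequently `P_{n_k}/Q` has a genuine (spurious) pole at `z = z_k`,
since `Q(z_k) = 0` while `P_{n_k}(z_k) ≠ 0`. -/
theorem stmt_5 (z c : ℕ → ℂ)
    (hz : ∀ k, 2 ≤ k → 0 < ‖z k‖ ∧ ‖z k‖ < 1 / 3)
    (hc0 : c 0 = 1)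
    (hck : ∀ k, 2 ≤ k → c (2 ^ k - 3) = 16 ^ k)
    (hcj : ∀ k, 2 ≤ k → ∀ j, 2 ^ k - 2 ≤ j → j ≤ 2 ^ (k + 1) - 4 →
      c j = 16 ^ k * z k ^ (2 ^ (k + 1) - 4 - j))
    (k : ℕ) (hk : 2 ≤ k)
    (n : ℕ → ℕ) (hn : ∀ j, n j = 2 ^ j - 2)
    (P Q : Polynomial ℂ)
    (hP : P = (1 + ∑ j ∈ Finset.Icc 2 (k - 1), Polynomial.C ((16 : ℂ) ^ j) *
          (X ^ (n j - 1) + Polynomial.C (z j ^ (2 * n j)) *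
            ∑ l ∈ Finset.Icc (n j) (2 * n j), Polynomial.C ((z j)⁻¹ ^ l) * X ^ l)) *
        (1 - Polynomial.C (z k)⁻¹ * X) +
      Polynomial.C ((16 : ℂ) ^ k) *
        (X ^ (n k - 1) - Polynomial.C (z k)⁻¹ * X ^ n k +
          Polynomial.C (z k ^ n k) * X ^ n k))
    (hQ : Q = 1 - Polynomial.C (z k)⁻¹ * X) :
    IsCoprime P Q ∧ Q.eval (z k) = 0 ∧ P.eval (z k) ≠ 0 :=
  stmt_5_general z hz k hk n hn P Q hP hQ
end

section
/- Fix an integer k ≥ 2 and set n = n_k. The vector b = (1, −1/z_k, 0, …, 0)ᵗ ∈ ℂ^{n+1} lies in the kernel of the matrix B_n, i.e. B_n b = 0. -/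
/-!
Every entry of the first two columns of `B_n`, `c_{n+i+1}` and `c_{n+i}` with `0 ≤ i < n`, has
its index in the block `[2^k - 2, 2^(k+1) - 4]`, where `c` is a geometric progression of ratio
`z_k` read downwards. Hence column 1 is `z_k` times column 0, which `b = e₀ - z_k⁻¹ e₁` cancels.
-/

theorem Matrix.mulVec_single_add_single_eq_zero {ι κ K : Type*} [Field K] [Fintype κ]
    [DecidableEq κ] (M : Matrix ι κ K) {w : K} (hw : w ≠ 0) (j₀ j₁ : κ)
    (h : ∀ i, M i j₁ = w * M i j₀) :
    M.mulVec (Pi.single j₀ 1 + Pi.single j₁ (-w⁻¹)) = 0 := by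
  ext i
  simp only [Matrix.mulVec_add, Matrix.mulVec_single, Pi.add_apply,
    Pi.smul_apply, Matrix.col_apply, op_smul_eq_mul, Pi.zero_apply, h]
  field_simp
  ring

theorem Fin.val_one_of_one_le {n : ℕ} (hn : 1 ≤ n) : ((1 : Fin (n + 1)) : ℕ) = 1 := by
  rw [Fin.val_one', Nat.mod_eq_of_lt (by omega)]

theorem Fin.ite_val_eq_single_add_single {R : Type*} [AddZeroClass R] {n : ℕ} (hn : 1 ≤ n)
    (x y : R) :
    (fun j : Fin (n + 1) => if (j : ℕ) = 0 then x else if (j : ℕ) = 1 then y else 0) =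
      Pi.single 0 x + Pi.single 1 y := by
  funext ⟨j, hj⟩
  simp only [Pi.add_apply, Pi.single_apply, Fin.ext_iff, Fin.val_zero, Fin.val_one_of_one_le hn]
  split_ifs <;> simp_all

theorem eq_mul_succ_of_eq_mul_pow_sub {R : Type*} [CommMonoid R] {f : ℕ → R} {a w : R}
    {L N : ℕ} (hf : ∀ j, L ≤ j → j ≤ N → f j = a * w ^ (N - j)) {j : ℕ} (hLj : L ≤ j)
    (hjN : j < N) : f j = w * f (j + 1) := by
  rw [hf j hLj hjN.le, hf (j + 1) (by omega) hjN, show N - j = N - (j + 1) + 1 by omega,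
    pow_succ]
  ac_rfl

theorem stmt_6_general (z c : ℕ → ℂ)
    (hz : ∀ k, 2 ≤ k → 0 < ‖z k‖ ∧ ‖z k‖ < 1 / 3)
    (hcj : ∀ k, 2 ≤ k → ∀ j, 2 ^ k - 2 ≤ j → j ≤ 2 ^ (k + 1) - 4 →
      c j = 16 ^ k * z k ^ (2 ^ (k + 1) - 4 - j))
    (k n : ℕ) (hk : 2 ≤ k) (hn : n = 2 ^ k - 2)
    (B : Matrix (Fin n) (Fin (n + 1)) ℂ)
    (hB : ∀ i j, B i j = c (n + (i : ℕ) + 1 - (j : ℕ)))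
    (b : Fin (n + 1) → ℂ)
    (hb : ∀ j, b j = if (j : ℕ) = 0 then 1 else if (j : ℕ) = 1 then -(z k)⁻¹ else 0) :
    B.mulVec b = 0 := by
  have h4 : 4 ≤ 2 ^ k := by simpa using Nat.pow_le_pow_right two_pos hk
  have h2k : 2 ^ (k + 1) = 2 * 2 ^ k := by ring
  have hn1 : 1 ≤ n := by omega
  rw [funext hb, Fin.ite_val_eq_single_add_single hn1]
  refine B.mulVec_single_add_single_eq_zero (norm_pos_iff.mp (hz k hk).1) 0 1 fun i => ?_
  rw [hB, hB, Fin.val_one_of_one_le hn1, Fin.val_zero, Nat.add_sub_cancel, Nat.sub_zero]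
  exact eq_mul_succ_of_eq_mul_pow_sub (hcj k hk) (by omega) (by omega)

/-- For fixed `k ≥ 2` and `n = n_k = 2^k − 2`, the vector
`b = (1, −1/z_k, 0, …, 0)ᵗ ∈ ℂ^{n+1}` lies in the kernel of `B_n`, i.e. `B_n b = 0`.
Here `B_n` is the `n × (n+1)` matrix whose (1-indexed) row `i` is
`(c_{n+i}, c_{n+i−1}, …, c_i)`, i.e. `(B_n)_{i,j} = c_{n+i+1−j}` (0-indexed below). -/
theorem stmt_6 (z c : ℕ → ℂ)
    (hz : ∀ k, 2 ≤ k → 0 < ‖z k‖ ∧ ‖z k‖ < 1 / 3)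
    (hc0 : c 0 = 1)
    (hck : ∀ k, 2 ≤ k → c (2 ^ k - 3) = 16 ^ k)
    (hcj : ∀ k, 2 ≤ k → ∀ j, 2 ^ k - 2 ≤ j → j ≤ 2 ^ (k + 1) - 4 →
      c j = 16 ^ k * z k ^ (2 ^ (k + 1) - 4 - j))
    (k n : ℕ) (hk : 2 ≤ k) (hn : n = 2 ^ k - 2)
    (B : Matrix (Fin n) (Fin (n + 1)) ℂ)
    (hB : ∀ i j, B i j = c (n + (i : ℕ) + 1 - (j : ℕ)))
    (b : Fin (n + 1) → ℂ)
    (hb : ∀ j, b j = if (j : ℕ) = 0 then 1 else if (j : ℕ) = 1 then -(z k)⁻¹ else 0) :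
    B.mulVec b = 0 :=
  stmt_6_general z c hz hcj k n hk hn B hB b hb
end

section
/- Fix an integer k ≥ 2 and set n = n_k. Then ∑_{j=1}^{n−2} |c_j| < 16^k / 6. -/
open Finset

lemma sum_Icc_pow_sub_le_inv_one_sub {x : ℝ} (hx₀ : 0 ≤ x) (hx₁ : x < 1) (a b : ℕ) :
    ∑ j ∈ Icc a b, x ^ (b - j) ≤ (1 - x)⁻¹ :=
  calc ∑ j ∈ Icc a b, x ^ (b - j)
      ≤ ∑ j ∈ range (b + 1), x ^ (b + 1 - 1 - j) :=
        sum_le_sum_of_subset_of_nonneg (fun j hj ↦ by simp at hj ⊢; omega)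
          (fun _ _ _ ↦ by positivity)
    _ = ∑ i ∈ Ico 0 (b + 1), x ^ i := by rw [sum_range_reflect (x ^ ·), Nat.Ico_zero_eq_range]
    _ ≤ x ^ 0 / (1 - x) := geom_sum_Ico_le_of_lt_one hx₀ hx₁
    _ = (1 - x)⁻¹ := by rw [pow_zero, one_div]

/-- The leading `16^k` plus a geometric tail of ratio `‖w‖ < 1/3`, which is at most `16^k · 3/2`. -/
lemma sum_norm_block_le {c : ℕ → ℂ} {w : ℂ} {k : ℕ} (hk : 2 ≤ k) (hw : ‖w‖ < 1 / 3)
    (hlead : c (2 ^ k - 3) = 16 ^ k)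
    (htail : ∀ j, 2 ^ k - 2 ≤ j → j ≤ 2 ^ (k + 1) - 4 → c j = 16 ^ k * w ^ (2 ^ (k + 1) - 4 - j)) :
    ∑ j ∈ Ioc (2 ^ k - 4) (2 ^ (k + 1) - 4), ‖c j‖ ≤ 5 / 2 * 16 ^ k := by
  have h4 : 4 ≤ 2 ^ k := le_trans (by norm_num) (Nat.pow_le_pow_right two_pos hk)
  have hpow : 2 ^ (k + 1) = 2 * 2 ^ k := by ring
  set b := 2 ^ (k + 1) - 4
  have htail_le : ∑ j ∈ Icc (2 ^ k - 2) b, ‖c j‖ ≤ 16 ^ k * (3 / 2) :=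
    calc ∑ j ∈ Icc (2 ^ k - 2) b, ‖c j‖
        = ∑ j ∈ Icc (2 ^ k - 2) b, 16 ^ k * ‖w‖ ^ (b - j) :=
          sum_congr rfl fun j hj ↦ by
            rw [mem_Icc] at hj
            simp [htail j hj.1 hj.2]
      _ ≤ 16 ^ k * (1 - ‖w‖)⁻¹ := by
          rw [← mul_sum]
          gcongr
          exact sum_Icc_pow_sub_le_inv_one_sub (norm_nonneg w) (by linarith) _ _
      _ ≤ 16 ^ k * (3 / 2) := by
          gcongr
          rw [inv_le_comm₀ (by linarith) (by norm_num)]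
          linarith
  have hsplit : Ioc (2 ^ k - 4) b = insert (2 ^ k - 3) (Icc (2 ^ k - 2) b) := by
    ext j; simp only [mem_Ioc, mem_insert, mem_Icc]; omega
  rw [hsplit, sum_insert (by simp; omega), hlead, norm_pow]
  norm_num at htail_le ⊢
  linarith

/-- `(16^k - 256)/6` is the sum of `5/2 · 16^i` over `2 ≤ i < k`. -/
lemma sum_Ioc_le_of_block_le (f : ℕ → ℝ)
    (hblock : ∀ k, 2 ≤ k → ∑ j ∈ Ioc (2 ^ k - 4) (2 ^ (k + 1) - 4), f j ≤ 5 / 2 * 16 ^ k)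
    {k : ℕ} (hk : 2 ≤ k) :
    ∑ j ∈ Ioc 0 (2 ^ k - 4), f j ≤ ((16 : ℝ) ^ k - 256) / 6 := by
  induction k, hk using Nat.le_induction with
  | base => norm_num
  | succ k hk ih =>
    rw [← sum_Ioc_consecutive f (Nat.zero_le (2 ^ k - 4))
      (Nat.sub_le_sub_right (Nat.pow_le_pow_right two_pos k.le_succ) 4), pow_succ 16]
    linarith [hblock k hk]

theorem stmt_11_general (z c : ℕ → ℂ)
    (hz : ∀ k, 2 ≤ k → 0 < ‖z k‖ ∧ ‖z k‖ < 1 / 3)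
    (hck : ∀ k, 2 ≤ k → c (2 ^ k - 3) = 16 ^ k)
    (hcj : ∀ k, 2 ≤ k → ∀ j, 2 ^ k - 2 ≤ j → j ≤ 2 ^ (k + 1) - 4 →
      c j = 16 ^ k * z k ^ (2 ^ (k + 1) - 4 - j))
    (k n : ℕ) (hk : 2 ≤ k) (hn : n = 2 ^ k - 2) :
    (∑ j ∈ Finset.Icc 1 (n - 2), ‖c j‖) < (16 : ℝ) ^ k / 6 := by
  have hblock k (hk : 2 ≤ k) :=
    sum_norm_block_le hk (hz k hk).2 (hck k hk) (hcj k hk)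
  rw [hn, Nat.sub_sub, ← zero_add 1, Icc_add_one_left_eq_Ioc]
  linarith [sum_Ioc_le_of_block_le _ hblock hk]

/-- For fixed `k ≥ 2` and `n = n_k = 2^k − 2`, `∑_{j=1}^{n−2} |c_j| < 16^k / 6`. -/
theorem stmt_11 (z c : ℕ → ℂ)
    (hz : ∀ k, 2 ≤ k → 0 < ‖z k‖ ∧ ‖z k‖ < 1 / 3)
    (hc0 : c 0 = 1)
    (hck : ∀ k, 2 ≤ k → c (2 ^ k - 3) = 16 ^ k)
    (hcj : ∀ k, 2 ≤ k → ∀ j, 2 ^ k - 2 ≤ j → j ≤ 2 ^ (k + 1) - 4 →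
      c j = 16 ^ k * z k ^ (2 ^ (k + 1) - 4 - j))
    (k n : ℕ) (hk : 2 ≤ k) (hn : n = 2 ^ k - 2) :
    (∑ j ∈ Finset.Icc 1 (n - 2), ‖c j‖) < (16 : ℝ) ^ k / 6 :=
  stmt_11_general z c hz hck hcj k n hk hn
end

section
/- Fix an integer k ≥ 2 and set n = n_k. Every eigenvalue λ of the Hermitian n×n matrix B_n B_nᴴ (where B_nᴴ is the conjugate transpose) satisfies (16^k/3)² < λ < (5·16^k/3)²; equivalently, every singular value σ of B_n satisfies 16^k/3 < σ < 5·16^k/3. -/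
/-!
Row `i < n - 1` of `B` contains the entry `c_{n-1} = 16^k` in column `i + 2`, and the last row has
`c_{2n} = 16^k z_k^0 = 16^k` in column `0`. These columns are distinct, so `B = 16^k P + E`
with `P Pᴴ = 1`, and `‖Bᴴ v‖` lies within `‖Eᴴ v‖` of `16^k ‖v‖`. Every index of `c` occurs at
most once in each row and each column of `E`, so by the Schur test `‖Eᴴ‖` is at most the sum of
the remaining `|c_m|`. The blocks `l < k` contribute at most `16^k/6` (block `l` contributes at
most `(5/2) 16^l`) and the top block at most `16^k |z_k| / (1 - |z_k|) < 16^k/2`, so `‖Eᴴ‖ < 2·16^k/3`.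
-/

open Finset Matrix WithLp

lemma sum_norm_Ico_le_geom {𝕜 : Type*} [NormedDivisionRing 𝕜] {c : ℕ → 𝕜} {A w : 𝕜}
    (hw : ‖w‖ < 1) {a b N : ℕ} (hbN : b ≤ N + 1)
    (hc : ∀ m ∈ Ico a b, c m = A * w ^ (N - m)) :
    ∑ m ∈ Ico a b, ‖c m‖ ≤ ‖A‖ * (‖w‖ ^ (N + 1 - b) / (1 - ‖w‖)) := by
  calc ∑ m ∈ Ico a b, ‖c m‖ = ‖A‖ * ∑ m ∈ Ico a b, ‖w‖ ^ (N - m) := by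
        rw [mul_sum]
        exact sum_congr rfl fun m hm => by rw [hc m hm, norm_mul, norm_pow]
    _ = ‖A‖ * ∑ e ∈ Ico (N + 1 - b) (N + 1 - a), ‖w‖ ^ e := by
        rw [sum_Ico_reflect (fun e => ‖w‖ ^ e) a hbN]
    _ ≤ ‖A‖ * (‖w‖ ^ (N + 1 - b) / (1 - ‖w‖)) := by
        gcongr
        exact geom_sum_Ico_le_of_lt_one (norm_nonneg w) hw

lemma sum_norm_comp_le_of_injective {ι E : Type*} [Fintype ι] [NormedAddCommGroup E]
    (f : ℕ → E) {g : ι → ℕ} (hg : Function.Injective g) {s : Finset ℕ}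
    (hs : ∀ x, f (g x) ≠ 0 → g x ∈ s) :
    ∑ x, ‖f (g x)‖ ≤ ∑ e ∈ s, ‖f e‖ := by
  classical
  calc ∑ x, ‖f (g x)‖ = ∑ x with g x ∈ s, ‖f (g x)‖ :=
        (sum_filter_of_ne fun x _ hx => hs x (by simpa using hx)).symm
    _ = ∑ e ∈ (univ.filter fun x => g x ∈ s).image g, ‖f e‖ :=
        (sum_image (f := fun e => ‖f e‖) hg.injOn).symm
    _ ≤ ∑ e ∈ s, ‖f e‖ :=
        sum_le_sum_of_subset_of_nonneg (by simp [subset_iff]) fun _ _ _ => norm_nonneg _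

lemma Matrix.submatrix_one_mul_conjTranspose {α l m : Type*} [Semiring α] [StarRing α] [Fintype m]
    [DecidableEq l] [DecidableEq m] {σ : l → m} (hσ : Function.Injective σ) :
    (1 : Matrix m m α).submatrix σ id * ((1 : Matrix m m α).submatrix σ id)ᴴ = 1 := by
  rw [conjTranspose_submatrix, conjTranspose_one, ← submatrix_mul _ _ _ _ _ Function.bijective_id,
    mul_one, submatrix_one _ hσ]

section EuclideanNorm

variable {𝕜 : Type*} [RCLike 𝕜] {l m : Type*} [Fintype l] [Fintype m]

theorem Matrix.norm_sq_mulVec_le_of_sum_norm_le (A : Matrix l m 𝕜) (v : m → 𝕜) {r c : ℝ}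
    (hr0 : 0 ≤ r) (hr : ∀ i, ∑ j, ‖A i j‖ ≤ r) (hc : ∀ j, ∑ i, ‖A i j‖ ≤ c) :
    ‖toLp 2 (A *ᵥ v)‖ ^ 2 ≤ r * c * ‖toLp 2 v‖ ^ 2 := by
  simp only [EuclideanSpace.norm_sq_eq]
  have hrow_sq (i : l) : ‖(A *ᵥ v) i‖ ^ 2 ≤ r * ∑ j, ‖A i j‖ * ‖v j‖ ^ 2 := by
    have htri : ‖(A *ᵥ v) i‖ ≤ ∑ j, ‖A i j‖ * ‖v j‖ :=
      (norm_sum_le _ _).trans_eq (sum_congr rfl fun j _ => norm_mul _ _)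
    calc ‖(A *ᵥ v) i‖ ^ 2 ≤ (∑ j, ‖A i j‖ * ‖v j‖) ^ 2 := by gcongr
      _ ≤ (∑ j, ‖A i j‖) * ∑ j, ‖A i j‖ * ‖v j‖ ^ 2 :=
        sum_sq_le_sum_mul_sum_of_sq_le_mul _ (fun _ _ => norm_nonneg _)
          (fun _ _ => by positivity) (fun _ _ => by ring_nf; rfl)
      _ ≤ r * ∑ j, ‖A i j‖ * ‖v j‖ ^ 2 := by gcongr; exact hr i
  calc ∑ i, ‖(A *ᵥ v) i‖ ^ 2 ≤ ∑ i, r * ∑ j, ‖A i j‖ * ‖v j‖ ^ 2 :=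
        sum_le_sum fun i _ => hrow_sq i
    _ = r * ∑ j, (∑ i, ‖A i j‖) * ‖v j‖ ^ 2 := by
        rw [← mul_sum, sum_comm]; simp only [sum_mul]
    _ ≤ r * ∑ j, c * ‖v j‖ ^ 2 := by gcongr with j; exact hc j
    _ = r * c * ∑ j, ‖v j‖ ^ 2 := by rw [← mul_sum, mul_assoc]

theorem Matrix.norm_mulVec_le_of_injective_index (A : Matrix l m 𝕜) (f : ℕ → 𝕜)
    (idx : l → m → ℕ) (hA : ∀ i j, ‖A i j‖ = ‖f (idx i j)‖)
    (hrow : ∀ i, Function.Injective (idx i)) (hcol : ∀ j, Function.Injective (idx · j))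
    {s : Finset ℕ} (hs : ∀ i j, f (idx i j) ≠ 0 → idx i j ∈ s) (v : m → 𝕜) :
    ‖toLp 2 (A *ᵥ v)‖ ≤ (∑ e ∈ s, ‖f e‖) * ‖toLp 2 v‖ := by
  have hS : 0 ≤ ∑ e ∈ s, ‖f e‖ := sum_nonneg fun _ _ => norm_nonneg _
  have hrowsum (i : l) : ∑ j, ‖A i j‖ ≤ ∑ e ∈ s, ‖f e‖ := by
    simpa only [hA] using sum_norm_comp_le_of_injective f (hrow i) (hs i)
  have hcolsum (j : m) : ∑ i, ‖A i j‖ ≤ ∑ e ∈ s, ‖f e‖ := by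
    simpa only [hA] using sum_norm_comp_le_of_injective f (hcol j) (hs · j)
  rw [← pow_le_pow_iff_left₀ (norm_nonneg _) (by positivity) two_ne_zero, mul_pow,
    sq (∑ e ∈ s, _)]
  exact A.norm_sq_mulVec_le_of_sum_norm_le v hS hrowsum hcolsum

lemma Matrix.norm_sq_conjTranspose_mulVec (M : Matrix l m 𝕜) (v : l → 𝕜) :
    ‖toLp 2 (Mᴴ *ᵥ v)‖ ^ 2 = RCLike.re (star v ⬝ᵥ (M * Mᴴ) *ᵥ v) := by
  rw [@norm_sq_eq_re_inner 𝕜, EuclideanSpace.inner_toLp_toLp, ← mulVec_mulVec, dotProduct_mulVec,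
    star_mulVec, conjTranspose_conjTranspose, dotProduct_comm]

lemma Matrix.norm_conjTranspose_mulVec_of_mul_conjTranspose_eq_one [DecidableEq l]
    {P : Matrix l m 𝕜} (hP : P * Pᴴ = 1) (v : l → 𝕜) : ‖toLp 2 (Pᴴ *ᵥ v)‖ = ‖toLp 2 v‖ := by
  have hv := (1 : Matrix l l 𝕜).norm_sq_conjTranspose_mulVec v
  rw [conjTranspose_one, mul_one, one_mulVec] at hv
  refine (pow_left_inj₀ (norm_nonneg _) (norm_nonneg _) two_ne_zero).1 ?_
  rw [norm_sq_conjTranspose_mulVec, hP, one_mulVec, hv]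

lemma Matrix.IsHermitian.eigenvalues_mul_conjTranspose [DecidableEq l] {B : Matrix l m 𝕜}
    (hH : (B * Bᴴ).IsHermitian) (i : l) :
    hH.eigenvalues i = ‖toLp 2 (Bᴴ *ᵥ ⇑(hH.eigenvectorBasis i))‖ ^ 2 := by
  rw [hH.eigenvalues_eq, norm_sq_conjTranspose_mulVec]

lemma Matrix.abs_norm_conjTranspose_mulVec_sub_le [DecidableEq l] {B P E : Matrix l m 𝕜} {a : 𝕜}
    (hB : B = a • P + E) (hP : P * Pᴴ = 1) (v : l → 𝕜) :
    |‖toLp 2 (Bᴴ *ᵥ v)‖ - ‖a‖ * ‖toLp 2 v‖| ≤ ‖toLp 2 (Eᴴ *ᵥ v)‖ := by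
  have hBv : toLp 2 (Bᴴ *ᵥ v) = star a • toLp 2 (Pᴴ *ᵥ v) + toLp 2 (Eᴴ *ᵥ v) := by
    rw [hB, conjTranspose_add, conjTranspose_smul, add_mulVec, smul_mulVec, toLp_add, toLp_smul]
  have hPv : ‖star a • toLp 2 (Pᴴ *ᵥ v)‖ = ‖a‖ * ‖toLp 2 v‖ := by
    rw [norm_smul, norm_star, norm_conjTranspose_mulVec_of_mul_conjTranspose_eq_one hP]
  rw [hBv, ← hPv]
  simpa using abs_norm_sub_norm_le (star a • toLp 2 (Pᴴ *ᵥ v) + toLp 2 (Eᴴ *ᵥ v))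
    (star a • toLp 2 (Pᴴ *ᵥ v))

theorem Matrix.IsHermitian.eigenvalues_mul_conjTranspose_mem_Icc [DecidableEq l]
    {B P E : Matrix l m 𝕜} (hH : (B * Bᴴ).IsHermitian) {a : 𝕜} (hB : B = a • P + E)
    (hP : P * Pᴴ = 1) {e : ℝ} (hE : ∀ v, ‖toLp 2 (Eᴴ *ᵥ v)‖ ≤ e * ‖toLp 2 v‖) (hea : e ≤ ‖a‖)
    (i : l) : hH.eigenvalues i ∈ Set.Icc ((‖a‖ - e) ^ 2) ((‖a‖ + e) ^ 2) := by
  set u := hH.eigenvectorBasis i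
  have hu : ‖toLp 2 ⇑u‖ = 1 := hH.eigenvectorBasis.orthonormal.1 i
  have hBu := abs_norm_conjTranspose_mulVec_sub_le hB hP u
  have hEu := hE u
  rw [hu, mul_one] at hBu hEu
  rw [hH.eigenvalues_mul_conjTranspose, Set.mem_Icc]
  obtain ⟨hlo, hhi⟩ := abs_le.1 (hBu.trans hEu)
  constructor <;> gcongr <;> linarith

end EuclideanNorm

section Coefficients

variable {z c : ℕ → ℂ}

lemma sum_norm_block_le_s13 {l : ℕ} (hl : 2 ≤ l) (hz : ‖z l‖ < 1 / 3) (hcl : c (2 ^ l - 3) = 16 ^ l)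
    (hcj : ∀ j, 2 ^ l - 2 ≤ j → j ≤ 2 ^ (l + 1) - 4 → c j = 16 ^ l * z l ^ (2 ^ (l + 1) - 4 - j)) :
    ∑ m ∈ Ico (2 ^ l - 3) (2 ^ (l + 1) - 3), ‖c m‖ ≤ 5 / 2 * 16 ^ l := by
  have h4 : 4 ≤ 2 ^ l := le_trans (by norm_num) (Nat.pow_le_pow_right two_pos hl)
  have h2 : 2 ^ (l + 1) = 2 * 2 ^ l := by ring
  have htail := sum_norm_Ico_le_geom (c := c) (a := 2 ^ l - 2) (b := 2 ^ (l + 1) - 3)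
    (N := 2 ^ (l + 1) - 4) (by linarith) (by omega)
    (fun m hm => hcj m (mem_Ico.1 hm).1 (by have := (mem_Ico.1 hm).2; omega))
  rw [show 2 ^ (l + 1) - 4 + 1 - (2 ^ (l + 1) - 3) = 0 by omega, pow_zero, norm_pow,
    RCLike.norm_ofNat] at htail
  have hgeom : 1 / (1 - ‖z l‖) ≤ 3 / 2 := by
    rw [div_le_div_iff₀ (by linarith) (by norm_num)]; linarith
  rw [sum_eq_sum_Ico_succ_bot (by omega), hcl, norm_pow, RCLike.norm_ofNat,
    show 2 ^ l - 3 + 1 = 2 ^ l - 2 by omega]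
  linarith [mul_le_mul_of_nonneg_left hgeom (by positivity : (0 : ℝ) ≤ 16 ^ l)]

lemma sum_norm_Ico_one_le (hz : ∀ l, 2 ≤ l → ‖z l‖ < 1 / 3)
    (hck : ∀ l, 2 ≤ l → c (2 ^ l - 3) = 16 ^ l)
    (hcj : ∀ l, 2 ≤ l → ∀ j, 2 ^ l - 2 ≤ j → j ≤ 2 ^ (l + 1) - 4 →
      c j = 16 ^ l * z l ^ (2 ^ (l + 1) - 4 - j))
    {k : ℕ} (hk : 2 ≤ k) : ∑ m ∈ Ico 1 (2 ^ k - 3), ‖c m‖ ≤ 16 ^ k / 6 := by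
  induction k, hk using Nat.le_induction with
  | base => norm_num
  | succ k hk ih =>
    have h4 : 4 ≤ 2 ^ k := le_trans (by norm_num) (Nat.pow_le_pow_right two_pos hk)
    have h2 : 2 ^ (k + 1) = 2 * 2 ^ k := by ring
    rw [← sum_Ico_consecutive _ (by omega : 1 ≤ 2 ^ k - 3)
      (by omega : 2 ^ k - 3 ≤ 2 ^ (k + 1) - 3)]
    linarith [sum_norm_block_le_s13 hk (hz k hk) (hck k hk) (hcj k hk), pow_succ (16 : ℝ) k]

lemma sum_norm_top_block_le {k : ℕ} (hk : 2 ≤ k) (hz : ‖z k‖ < 1)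
    (hcj : ∀ j, 2 ^ k - 2 ≤ j → j ≤ 2 ^ (k + 1) - 4 → c j = 16 ^ k * z k ^ (2 ^ (k + 1) - 4 - j)) :
    ∑ m ∈ Ico (2 ^ k - 2) (2 ^ (k + 1) - 4), ‖c m‖ ≤ 16 ^ k * (‖z k‖ / (1 - ‖z k‖)) := by
  have h4 : 4 ≤ 2 ^ k := le_trans (by norm_num) (Nat.pow_le_pow_right two_pos hk)
  have h2 : 2 ^ (k + 1) = 2 * 2 ^ k := by ring
  have h := sum_norm_Ico_le_geom hz (a := 2 ^ k - 2) (b := 2 ^ (k + 1) - 4) (N := 2 ^ (k + 1) - 4)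
    (by omega) (fun m hm => hcj m (mem_Ico.1 hm).1 (mem_Ico.1 hm).2.le)
  rwa [show 2 ^ (k + 1) - 4 + 1 - (2 ^ (k + 1) - 4) = 1 by omega, pow_one, norm_pow,
    RCLike.norm_ofNat] at h

/-- The indices of `c` occurring in `B_n`, except `n - 1` and `2n`. -/
def offDominant (n : ℕ) : Finset ℕ := Ico 1 (n - 1) ∪ Ico n (2 * n)

lemma sum_norm_offDominant_lt (hz : ∀ l, 2 ≤ l → ‖z l‖ < 1 / 3)
    (hck : ∀ l, 2 ≤ l → c (2 ^ l - 3) = 16 ^ l)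
    (hcj : ∀ l, 2 ≤ l → ∀ j, 2 ^ l - 2 ≤ j → j ≤ 2 ^ (l + 1) - 4 →
      c j = 16 ^ l * z l ^ (2 ^ (l + 1) - 4 - j))
    {k n : ℕ} (hk : 2 ≤ k) (hn : n = 2 ^ k - 2) :
    ∑ m ∈ offDominant n, ‖c m‖ < 2 / 3 * 16 ^ k := by
  have h4 : 4 ≤ 2 ^ k := le_trans (by norm_num) (Nat.pow_le_pow_right two_pos hk)
  have h2 : 2 ^ (k + 1) = 2 * 2 ^ k := by ring
  have hdisj : Disjoint (Ico 1 (n - 1)) (Ico n (2 * n)) :=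
    Ico_disjoint_Ico_consecutive _ _ _ |>.mono_right (Ico_subset_Ico_left (by omega))
  have hlow := sum_norm_Ico_one_le hz hck hcj hk
  have htop := sum_norm_top_block_le hk ((hz k hk).trans (by norm_num)) (hcj k hk)
  rw [show 2 ^ k - 3 = n - 1 by omega] at hlow
  rw [show 2 ^ k - 2 = n by omega, show 2 ^ (k + 1) - 4 = 2 * n by omega] at htop
  have hratio : ‖z k‖ / (1 - ‖z k‖) < 1 / 2 := by
    have := hz k hk
    rw [div_lt_div_iff₀ (by linarith) (by norm_num)]; linarith
  rw [offDominant, sum_union hdisj]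
  linarith [mul_lt_mul_of_pos_left hratio (by positivity : (0 : ℝ) < 16 ^ k)]

end Coefficients

section DominantPart

/-- The column of row `i` of `B_n` whose entry has index `n - 1` (if `i + 2 ≤ n`) or `2n`. -/
def dominantCol (n : ℕ) (i : Fin n) : Fin (n + 1) :=
  if h : (i : ℕ) + 2 ≤ n then ⟨i + 2, by omega⟩ else 0

lemma val_dominantCol {n : ℕ} (i : Fin n) :
    (dominantCol n i : ℕ) = if (i : ℕ) + 2 ≤ n then (i : ℕ) + 2 else 0 := by
  unfold dominantCol; split_ifs <;> rfl

lemma dominantCol_injective (n : ℕ) : Function.Injective (dominantCol n) := by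
  intro a b h
  rw [Fin.ext_iff, val_dominantCol, val_dominantCol] at h
  ext; split_ifs at h <;> omega

lemma mem_offDominant_iff {n : ℕ} (i : Fin n) (j : Fin (n + 1)) :
    n + i + 1 - j ∈ offDominant n ↔ dominantCol n i ≠ j := by
  rw [offDominant, mem_union, mem_Ico, mem_Ico, Ne, Fin.ext_iff, val_dominantCol]
  split_ifs <;> omega

lemma index_dominantCol {n : ℕ} (i : Fin n) :
    n + i + 1 - dominantCol n i = n - 1 ∨ n + i + 1 - dominantCol n i = 2 * n := by
  rw [val_dominantCol]
  split_ifs <;> omega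

noncomputable def offDominantPart (n : ℕ) (c : ℕ → ℂ) : Matrix (Fin n) (Fin (n + 1)) ℂ :=
  of fun i j => (offDominant n : Set ℕ).indicator c (n + i + 1 - j)

lemma eq_smul_submatrix_one_add_offDominantPart {n : ℕ} {c : ℕ → ℂ} {a : ℂ}
    (hc₁ : c (n - 1) = a) (hc₂ : c (2 * n) = a) {B : Matrix (Fin n) (Fin (n + 1)) ℂ}
    (hB : ∀ i j, B i j = c (n + i + 1 - j)) :
    B = a • (1 : Matrix (Fin (n + 1)) (Fin (n + 1)) ℂ).submatrix (dominantCol n) id +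
      offDominantPart n c := by
  ext i j
  by_cases h : dominantCol n i = j
  · subst h
    have hmem : n + i + 1 - dominantCol n i ∉ (offDominant n : Set ℕ) := by
      simp [mem_offDominant_iff]
    have hBi : B i (dominantCol n i) = a := by
      rw [hB]; rcases index_dominantCol i with h | h <;> rw [h] <;> assumption
    simp [offDominantPart, Set.indicator_of_notMem hmem, hBi, one_apply]
  · have hmem : n + i + 1 - j ∈ (offDominant n : Set ℕ) := (mem_offDominant_iff i j).2 h
    simp [offDominantPart, hB, Set.indicator_of_mem hmem, one_apply, h]

lemma norm_conjTranspose_offDominantPart_mulVec_le (n : ℕ) (c : ℕ → ℂ) (v : Fin n → ℂ) :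
    ‖toLp 2 ((offDominantPart n c)ᴴ *ᵥ v)‖ ≤ (∑ m ∈ offDominant n, ‖c m‖) * ‖toLp 2 v‖ := by
  have h := (offDominantPart n c)ᴴ.norm_mulVec_le_of_injective_index
    ((offDominant n : Set ℕ).indicator c) (fun j i => n + i + 1 - j)
    (fun j i => by simp [offDominantPart])
    (fun j a b hab => Fin.ext (by simp only at hab; omega))
    (fun i a b hab => Fin.ext (by simp only at hab; omega))
    (fun j i => Set.mem_of_indicator_ne_zero) v
  rwa [sum_congr rfl fun m hm => by rw [Set.indicator_of_mem (mem_coe.2 hm)]] at h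

end DominantPart

theorem stmt_13_general (z c : ℕ → ℂ)
    (hz : ∀ k, 2 ≤ k → 0 < ‖z k‖ ∧ ‖z k‖ < 1 / 3)
    (hck : ∀ k, 2 ≤ k → c (2 ^ k - 3) = 16 ^ k)
    (hcj : ∀ k, 2 ≤ k → ∀ j, 2 ^ k - 2 ≤ j → j ≤ 2 ^ (k + 1) - 4 →
      c j = 16 ^ k * z k ^ (2 ^ (k + 1) - 4 - j))
    (k n : ℕ) (hk : 2 ≤ k) (hn : n = 2 ^ k - 2)
    (B : Matrix (Fin n) (Fin (n + 1)) ℂ)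
    (hB : ∀ i j, B i j = c (n + (i : ℕ) + 1 - (j : ℕ)))
    (hH : (B * B.conjTranspose).IsHermitian) :
    ∀ i : Fin n, ((16 : ℝ) ^ k / 3) ^ 2 < hH.eigenvalues i ∧
      hH.eigenvalues i < (5 * (16 : ℝ) ^ k / 3) ^ 2 := by
  intro i
  have h4 : 4 ≤ 2 ^ k := le_trans (by norm_num) (Nat.pow_le_pow_right two_pos hk)
  have h2 : 2 ^ (k + 1) = 2 * 2 ^ k := by ring
  have hc₁ : c (n - 1) = 16 ^ k := by rw [show n - 1 = 2 ^ k - 3 by omega, hck k hk]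
  have hc₂ : c (2 * n) = 16 ^ k := by
    rw [hcj k hk (2 * n) (by omega) (by omega), show 2 ^ (k + 1) - 4 - 2 * n = 0 by omega,
      pow_zero, mul_one]
  set e := ∑ m ∈ offDominant n, ‖c m‖
  have he : e < 2 / 3 * 16 ^ k := sum_norm_offDominant_lt (fun l hl => (hz l hl).2) hck hcj hk hn
  have he₀ : 0 ≤ e := sum_nonneg fun _ _ => norm_nonneg _
  have h16 : ‖(16 : ℂ) ^ k‖ = 16 ^ k := by simp
  obtain ⟨hlo, hhi⟩ := hH.eigenvalues_mul_conjTranspose_mem_Icc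
    (eq_smul_submatrix_one_add_offDominantPart hc₁ hc₂ hB)
    (submatrix_one_mul_conjTranspose (dominantCol_injective n))
    (norm_conjTranspose_offDominantPart_mulVec_le n c) (by linarith) i
  rw [h16] at hlo hhi
  constructor
  · exact (pow_lt_pow_left₀ (by linarith) (by positivity) two_ne_zero).trans_le hlo
  · exact hhi.trans_lt (pow_lt_pow_left₀ (by linarith) (by positivity) two_ne_zero)

/-- For fixed `k ≥ 2` and `n = n_k = 2^k − 2`, every eigenvalue `λ` of the
Hermitian matrix `B_n B_nᴴ` satisfies `(16^k/3)² < λ < (5·16^k/3)²`; equivalently every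
singular value `σ` of `B_n` satisfies `16^k/3 < σ < 5·16^k/3`. -/
theorem stmt_13 (z c : ℕ → ℂ)
    (hz : ∀ k, 2 ≤ k → 0 < ‖z k‖ ∧ ‖z k‖ < 1 / 3)
    (hc0 : c 0 = 1)
    (hck : ∀ k, 2 ≤ k → c (2 ^ k - 3) = 16 ^ k)
    (hcj : ∀ k, 2 ≤ k → ∀ j, 2 ^ k - 2 ≤ j → j ≤ 2 ^ (k + 1) - 4 →
      c j = 16 ^ k * z k ^ (2 ^ (k + 1) - 4 - j))
    (k n : ℕ) (hk : 2 ≤ k) (hn : n = 2 ^ k - 2)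
    (B : Matrix (Fin n) (Fin (n + 1)) ℂ)
    (hB : ∀ i j, B i j = c (n + (i : ℕ) + 1 - (j : ℕ)))
    (hH : (B * B.conjTranspose).IsHermitian) :
    ∀ i : Fin n, ((16 : ℝ) ^ k / 3) ^ 2 < hH.eigenvalues i ∧
      hH.eigenvalues i < (5 * (16 : ℝ) ^ k / 3) ^ 2 :=
  stmt_13_general z c hz hck hcj k n hk hn B hB hH
end

section
/- Fix an integer k ≥ 2 and set n = n_k. Any two eigenvalues λ, μ of the Hermitian matrix B_n B_nᴴ satisfy λ < 25·μ; equivalently, the largest singular value σ₁(B_n) and the smallest singular value σ_n(B_n) of B_n satisfy σ₁(B_n) < 5·σ_n(B_n), so the spectral condition number of B_n is smaller than 5. -/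
/-!
For a unit eigenvector `v` of `B Bᴴ` the eigenvalue is `‖Bᴴ v‖²`. Write `B = ∑ c_d U_d`, where
`U_d` is the 0/1 matrix of the diagonal on which `B` has the entry `c_d`. Every `U_d` has at most
one `1` in each row and column, so `‖U_dᴴ v‖ ≤ ‖v‖`. The two coefficients `c_{n-1} = c_{2n} = 16ᵏ`
sit on diagonals that together put exactly one `1` in each row (at column `i + 2 mod n + 1`), so
`‖(U_{n-1} + U_{2n})ᴴ v‖ = ‖v‖`. Since `|z_k| ≤ 1/3`, the other coefficients are dominated by
geometric series: the blocks below `k` contribute at most `16ᵏ/6` and the rest of block `k` less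
than `16ᵏ/2`. Hence `‖Bᴴ v‖` lies strictly between `16ᵏ/3` and `5·16ᵏ/3`.
-/

open Matrix WithLp Finset

theorem Finset.norm_sum_sq_of_card_le_one {ι E : Type*} [SeminormedAddCommGroup E] {s : Finset ι}
    (hs : #s ≤ 1) (f : ι → E) : ‖∑ i ∈ s, f i‖ ^ 2 = ∑ i ∈ s, ‖f i‖ ^ 2 := by
  obtain hs | hs := Nat.le_one_iff_eq_zero_or_eq_one.mp hs
  · simp [card_eq_zero.mp hs]
  · obtain ⟨a, rfl⟩ := card_eq_one.mp hs
    simp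

namespace Matrix

variable {ι κ m n α 𝕜 : Type*} [RCLike 𝕜]

section Relation

def ofRel (C : ι → κ → Prop) [DecidableRel C] : Matrix ι κ 𝕜 :=
  of fun i j => if C i j then 1 else 0

theorem ofRel_add_ofRel {C D : ι → κ → Prop} [DecidableRel C] [DecidableRel D]
    (hCD : ∀ i j, C i j → ¬D i j) :
    (ofRel C + ofRel D : Matrix ι κ 𝕜) = ofRel fun i j => C i j ∨ D i j := by
  ext i j
  by_cases hC : C i j
  · simp [ofRel, hC, hCD i j hC]
  · simp [ofRel, hC]

variable [Fintype ι] [Fintype κ] (C : ι → κ → Prop) [DecidableRel C]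
  (hrow : ∀ i j j', C i j → C i j' → j = j') (hcol : ∀ i i' j, C i j → C i' j → i = i')
include hrow hcol

theorem norm_sq_conjTranspose_ofRel_mulVec (v : ι → 𝕜) :
    ‖toLp 2 ((ofRel C : Matrix ι κ 𝕜)ᴴ *ᵥ v)‖ ^ 2 = ∑ i with ∃ j, C i j, ‖v i‖ ^ 2 := by
  have hcard_col (j : κ) : #{i | C i j} ≤ 1 :=
    card_le_one.mpr fun i hi i' hi' => hcol i i' j (mem_filter.mp hi).2 (mem_filter.mp hi').2
  have hcard_row (i : ι) : #{j | C i j} = if ∃ j, C i j then 1 else 0 := by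
    split_ifs with h
    · obtain ⟨j, hj⟩ := h
      exact card_eq_one.mpr ⟨j, eq_singleton_iff_unique_mem.mpr
        ⟨mem_filter.mpr ⟨mem_univ _, hj⟩, fun j' hj' => hrow i j' j (mem_filter.mp hj').2 hj⟩⟩
    · push Not at h
      simp [h]
  calc ‖toLp 2 ((ofRel C : Matrix ι κ 𝕜)ᴴ *ᵥ v)‖ ^ 2
      = ∑ j, ‖∑ i with C i j, v i‖ ^ 2 := by
        simp [ofRel, EuclideanSpace.norm_sq_eq, mulVec, dotProduct, sum_filter]
    _ = ∑ j, ∑ i with C i j, ‖v i‖ ^ 2 := by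
        simp_rw [norm_sum_sq_of_card_le_one (hcard_col _)]
    _ = ∑ i, #{j | C i j} * ‖v i‖ ^ 2 := by
        simp_rw [sum_filter, card_filter, Nat.cast_sum, sum_mul]
        rw [sum_comm]
        simp
    _ = ∑ i with ∃ j, C i j, ‖v i‖ ^ 2 := by
        simp [hcard_row, sum_filter]

theorem norm_conjTranspose_ofRel_mulVec_le (v : ι → 𝕜) :
    ‖toLp 2 ((ofRel C : Matrix ι κ 𝕜)ᴴ *ᵥ v)‖ ≤ ‖toLp 2 v‖ := by
  refine (pow_le_pow_iff_left₀ (norm_nonneg _) (norm_nonneg _) two_ne_zero).mp ?_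
  rw [norm_sq_conjTranspose_ofRel_mulVec C hrow hcol, EuclideanSpace.norm_sq_eq]
  exact sum_le_sum_of_subset_of_nonneg (filter_subset _ _) fun _ _ _ => by positivity

theorem norm_conjTranspose_ofRel_mulVec_eq (htot : ∀ i, ∃ j, C i j) (v : ι → 𝕜) :
    ‖toLp 2 ((ofRel C : Matrix ι κ 𝕜)ᴴ *ᵥ v)‖ = ‖toLp 2 v‖ := by
  refine (pow_left_inj₀ (norm_nonneg _) (norm_nonneg _) two_ne_zero).mp ?_
  rw [norm_sq_conjTranspose_ofRel_mulVec C hrow hcol, EuclideanSpace.norm_sq_eq,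
    filter_true_of_mem fun i _ => htot i]

end Relation

section Eigenvalues

variable [Fintype m] [Fintype n]

theorem norm_conjTranspose_sum_smul_mulVec_le (S : Finset α) (a : α → 𝕜) (J : α → Matrix m n 𝕜)
    (hJ : ∀ x v, ‖toLp 2 ((J x)ᴴ *ᵥ v)‖ ≤ ‖toLp 2 v‖) (v : m → 𝕜) :
    ‖toLp 2 ((∑ x ∈ S, a x • J x)ᴴ *ᵥ v)‖ ≤ (∑ x ∈ S, ‖a x‖) * ‖toLp 2 v‖ := by
  simp only [conjTranspose_sum, conjTranspose_smul, sum_mulVec, smul_mulVec, toLp_sum,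
    toLp_smul, sum_mul]
  refine (norm_sum_le _ _).trans (sum_le_sum fun x _ => ?_)
  rw [norm_smul, norm_star]
  exact mul_le_mul_of_nonneg_left (hJ x v) (norm_nonneg _)

variable [DecidableEq m]

theorem IsHermitian.eigenvalues_mul_conjTranspose_s14 {M : Matrix m n 𝕜} (hH : (M * Mᴴ).IsHermitian)
    (i : m) : hH.eigenvalues i = ‖toLp 2 (Mᴴ *ᵥ hH.eigenvectorBasis i)‖ ^ 2 := by
  have hstar (v : m → 𝕜) : star v ᵥ* M = star (Mᴴ *ᵥ v) := by
    rw [star_mulVec, conjTranspose_conjTranspose]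
  rw [hH.eigenvalues_eq, ← mulVec_mulVec, dotProduct_mulVec, hstar, dotProduct_comm,
    ← EuclideanSpace.inner_toLp_toLp, inner_self_eq_norm_sq]

theorem IsHermitian.eigenvalues_mem_Icc_of_eq_smul_add {M P R : Matrix m n 𝕜} {s : 𝕜} {r : ℝ}
    (hH : (M * Mᴴ).IsHermitian) (hM : M = s • P + R)
    (hP : ∀ v, ‖toLp 2 (Pᴴ *ᵥ v)‖ = ‖toLp 2 v‖) (hR : ∀ v, ‖toLp 2 (Rᴴ *ᵥ v)‖ ≤ r * ‖toLp 2 v‖)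
    (hr : r ≤ ‖s‖) (i : m) :
    hH.eigenvalues i ∈ Set.Icc ((‖s‖ - r) ^ 2) ((‖s‖ + r) ^ 2) := by
  set v := hH.eigenvectorBasis i
  have hv : ‖toLp 2 (ofLp v)‖ = 1 := by
    rw [toLp_ofLp]; exact hH.eigenvectorBasis.orthonormal.1 i
  have hMv : toLp 2 (Mᴴ *ᵥ v) = star s • toLp 2 (Pᴴ *ᵥ v) + toLp 2 (Rᴴ *ᵥ v) := by
    rw [hM, conjTranspose_add, conjTranspose_smul, add_mulVec, smul_mulVec, toLp_add, toLp_smul]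
  have hPv : ‖star s • toLp 2 (Pᴴ *ᵥ v)‖ = ‖s‖ := by rw [norm_smul, norm_star, hP, hv, mul_one]
  have hRv : ‖toLp 2 (Rᴴ *ᵥ v)‖ ≤ r := by simpa [hv] using hR v
  have hupper : ‖toLp 2 (Mᴴ *ᵥ v)‖ ≤ ‖s‖ + r := by
    rw [hMv]; linarith [norm_add_le (star s • toLp 2 (Pᴴ *ᵥ v)) (toLp 2 (Rᴴ *ᵥ v))]
  have hlower : ‖s‖ - r ≤ ‖toLp 2 (Mᴴ *ᵥ v)‖ := by
    rw [hMv]; linarith [norm_le_add_norm_add (star s • toLp 2 (Pᴴ *ᵥ v)) (toLp 2 (Rᴴ *ᵥ v))]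
  rw [hH.eigenvalues_mul_conjTranspose_s14]
  exact ⟨pow_le_pow_left₀ (by linarith) hlower 2, pow_le_pow_left₀ (by linarith) hupper 2⟩

end Eigenvalues

end Matrix

section Toeplitz

variable (𝕜 : Type*) [RCLike 𝕜] (n : ℕ)

def toeplitzUnit (d : ℕ) : Matrix (Fin n) (Fin (n + 1)) 𝕜 :=
  ofRel fun i j => (i : ℕ) + n + 1 = d + j

theorem eq_sum_smul_toeplitzUnit {c : ℕ → 𝕜} {B : Matrix (Fin n) (Fin (n + 1)) 𝕜}
    (hB : ∀ i j, B i j = c (n + (i : ℕ) + 1 - (j : ℕ))) :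
    B = ∑ d ∈ Ioc 0 (2 * n), c d • toeplitzUnit 𝕜 n d := by
  ext i j
  have hd (d : ℕ) : (i : ℕ) + n + 1 = d + j ↔ n + (i : ℕ) + 1 - j = d := by omega
  simp only [hB, Matrix.sum_apply, Matrix.smul_apply, toeplitzUnit, ofRel, of_apply, hd,
    smul_eq_mul, mul_ite, mul_one, mul_zero, sum_ite_eq, mem_Ioc]
  rw [if_pos (by omega)]

variable {𝕜}

theorem norm_conjTranspose_toeplitzUnit_mulVec_le (d : ℕ) (v : Fin n → 𝕜) :
    ‖toLp 2 ((toeplitzUnit 𝕜 n d)ᴴ *ᵥ v)‖ ≤ ‖toLp 2 v‖ :=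
  norm_conjTranspose_ofRel_mulVec_le _ (fun _ _ _ h h' => Fin.ext (by omega))
    (fun _ _ _ h h' => Fin.ext (by omega)) v

theorem norm_conjTranspose_toeplitzUnit_add_mulVec (v : Fin n → 𝕜) :
    ‖toLp 2 ((toeplitzUnit 𝕜 n (n - 1) + toeplitzUnit 𝕜 n (2 * n))ᴴ *ᵥ v)‖ = ‖toLp 2 v‖ := by
  rw [toeplitzUnit, toeplitzUnit, ofRel_add_ofRel fun i j h h' => by omega]
  refine norm_conjTranspose_ofRel_mulVec_eq _ ?_ ?_ ?_ v
  · rintro i j j' (h | h) (h' | h') <;> exact Fin.ext (by omega)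
  · rintro i i' j (h | h) (h' | h') <;> exact Fin.ext (by omega)
  · intro i
    by_cases hi : (i : ℕ) + 2 ≤ n
    · exact ⟨⟨i + 2, by omega⟩, Or.inl (by dsimp only; omega)⟩
    · exact ⟨⟨0, by omega⟩, Or.inr (by dsimp only; omega)⟩

end Toeplitz

theorem sum_Ioc_one_third_pow_lt (a D : ℕ) : ∑ j ∈ Ioc a D, (1 / 3 : ℝ) ^ (D - j) < 3 / 2 :=
  calc ∑ j ∈ Ioc a D, (1 / 3 : ℝ) ^ (D - j)
      ≤ ∑ j ∈ range (D + 1), (1 / 3 : ℝ) ^ (D - j) :=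
        sum_le_sum_of_subset_of_nonneg (fun j hj => by simp only [mem_Ioc, mem_range] at hj ⊢; omega)
          fun _ _ _ => by positivity
    _ = ∑ j ∈ range (D + 1), (1 / 3 : ℝ) ^ j := by
        simpa using sum_range_reflect (fun j => (1 / 3 : ℝ) ^ j) (D + 1)
    _ < 3 / 2 := by
        rw [geom_sum_eq (by norm_num), div_lt_iff_of_neg (by norm_num)]
        linarith [pow_pos (show (0 : ℝ) < 1 / 3 by norm_num) (D + 1)]

section Coefficients

variable {c : ℕ → ℂ} (hspike : ∀ k, 2 ≤ k → ‖c (2 ^ k - 3)‖ ≤ 16 ^ k)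
  (hramp : ∀ k, 2 ≤ k → ∀ j, 2 ^ k - 2 ≤ j → j ≤ 2 ^ (k + 1) - 4 →
    ‖c j‖ ≤ 16 ^ k * (1 / 3) ^ (2 ^ (k + 1) - 4 - j))
include hramp

theorem sum_norm_Ioc_lt_of_ramp {k : ℕ} (hk : 2 ≤ k) {a D : ℕ} (ha : 2 ^ k - 3 ≤ a)
    (hD : D ≤ 2 ^ (k + 1) - 4) :
    ∑ j ∈ Ioc a D, ‖c j‖ < 3 / 2 * 16 ^ k * (1 / 3) ^ (2 ^ (k + 1) - 4 - D) :=
  calc ∑ j ∈ Ioc a D, ‖c j‖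
      ≤ ∑ j ∈ Ioc a D, 16 ^ k * (1 / 3 : ℝ) ^ (2 ^ (k + 1) - 4 - D) * (1 / 3) ^ (D - j) := by
        refine sum_le_sum fun j hj => ?_
        rw [mem_Ioc] at hj
        rw [mul_assoc, ← pow_add, show 2 ^ (k + 1) - 4 - D + (D - j) = 2 ^ (k + 1) - 4 - j by omega]
        exact hramp k hk j (by omega) (by omega)
    _ = 16 ^ k * (1 / 3 : ℝ) ^ (2 ^ (k + 1) - 4 - D) * ∑ j ∈ Ioc a D, (1 / 3) ^ (D - j) :=
        (mul_sum ..).symm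
    _ < 16 ^ k * (1 / 3 : ℝ) ^ (2 ^ (k + 1) - 4 - D) * (3 / 2) := by
        gcongr; exact sum_Ioc_one_third_pow_lt a D
    _ = 3 / 2 * 16 ^ k * (1 / 3) ^ (2 ^ (k + 1) - 4 - D) := by ring

include hspike

theorem sum_norm_Ioc_zero_le {K : ℕ} (hK : 2 ≤ K) :
    ∑ j ∈ Ioc 0 (2 ^ K - 4), ‖c j‖ ≤ 16 ^ K / 6 := by
  induction K, hK using Nat.le_induction with
  | base => norm_num
  | succ K hK ih =>
    have h4 : 4 ≤ 2 ^ K := le_trans (by norm_num) (Nat.pow_le_pow_right two_pos hK)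
    have hpow : 2 ^ (K + 1) = 2 * 2 ^ K := pow_succ' 2 K
    rw [← sum_Ioc_consecutive _ (Nat.zero_le _) (show 2 ^ K - 4 ≤ 2 ^ (K + 1) - 4 by omega),
      ← sum_Ioc_consecutive _ (show 2 ^ K - 4 ≤ 2 ^ K - 3 by omega)
        (show 2 ^ K - 3 ≤ 2 ^ (K + 1) - 4 by omega),
      show Ioc (2 ^ K - 4) (2 ^ K - 3) = {2 ^ K - 3} by ext; simp only [mem_Ioc, mem_singleton]; omega, sum_singleton]
    have hblock := sum_norm_Ioc_lt_of_ramp hramp hK le_rfl le_rfl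
    rw [Nat.sub_self, pow_zero, mul_one] at hblock
    have hspikeK := hspike K hK
    rw [pow_succ (16 : ℝ)]
    linarith

theorem sum_norm_erase_spikes_lt {k n : ℕ} (hk : 2 ≤ k) (hn : n = 2 ^ k - 2) :
    ∑ d ∈ ((Ioc 0 (2 * n)).erase (2 * n)).erase (n - 1), ‖c d‖ < 2 / 3 * 16 ^ k := by
  have h4 : 4 ≤ 2 ^ k := le_trans (by norm_num) (Nat.pow_le_pow_right two_pos hk)
  have hpow : 2 ^ (k + 1) = 2 * 2 ^ k := pow_succ' 2 k
  have hsplit : ((Ioc 0 (2 * n)).erase (2 * n)).erase (n - 1)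
      = Ioc 0 (2 ^ k - 4) ∪ Ioc (2 ^ k - 3) (2 ^ (k + 1) - 5) := by
    ext; simp only [mem_erase, mem_Ioc, mem_union]; omega
  have hdisj : Disjoint (Ioc 0 (2 ^ k - 4)) (Ioc (2 ^ k - 3) (2 ^ (k + 1) - 5)) :=
    disjoint_left.mpr fun j hj hj' => by simp only [mem_Ioc] at hj hj'; omega
  rw [hsplit, sum_union hdisj]
  have hlow := sum_norm_Ioc_zero_le hspike hramp hk
  have hramp_k := sum_norm_Ioc_lt_of_ramp hramp hk le_rfl
    (show 2 ^ (k + 1) - 5 ≤ 2 ^ (k + 1) - 4 by omega)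
  rw [show 2 ^ (k + 1) - 4 - (2 ^ (k + 1) - 5) = 1 by omega] at hramp_k
  linarith

end Coefficients

theorem stmt_14_general (z c : ℕ → ℂ)
    (hz : ∀ k, 2 ≤ k → 0 < ‖z k‖ ∧ ‖z k‖ < 1 / 3)
    (hck : ∀ k, 2 ≤ k → c (2 ^ k - 3) = 16 ^ k)
    (hcj : ∀ k, 2 ≤ k → ∀ j, 2 ^ k - 2 ≤ j → j ≤ 2 ^ (k + 1) - 4 →
      c j = 16 ^ k * z k ^ (2 ^ (k + 1) - 4 - j))
    (k n : ℕ) (hk : 2 ≤ k) (hn : n = 2 ^ k - 2)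
    (B : Matrix (Fin n) (Fin (n + 1)) ℂ)
    (hB : ∀ i j, B i j = c (n + (i : ℕ) + 1 - (j : ℕ)))
    (hH : (B * B.conjTranspose).IsHermitian) :
    ∀ i j : Fin n, hH.eigenvalues i < 25 * hH.eigenvalues j := by
  have h4 : 4 ≤ 2 ^ k := le_trans (by norm_num) (Nat.pow_le_pow_right two_pos hk)
  have hpow : 2 ^ (k + 1) = 2 * 2 ^ k := pow_succ' 2 k
  have hspike : ∀ k, 2 ≤ k → ‖c (2 ^ k - 3)‖ ≤ 16 ^ k := fun k hk => by simp [hck k hk]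
  have hramp : ∀ k, 2 ≤ k → ∀ j, 2 ^ k - 2 ≤ j → j ≤ 2 ^ (k + 1) - 4 →
      ‖c j‖ ≤ 16 ^ k * (1 / 3) ^ (2 ^ (k + 1) - 4 - j) := fun k hk j hj hj' => by
    rw [hcj k hk j hj hj', norm_mul, norm_pow, norm_pow]
    gcongr
    · norm_num
    · exact (hz k hk).2.le
  have hc1 : c (n - 1) = 16 ^ k := by rw [show n - 1 = 2 ^ k - 3 by omega, hck k hk]
  have hc2 : c (2 * n) = 16 ^ k := by
    rw [hcj k hk (2 * n) (by omega) (by omega), show 2 ^ (k + 1) - 4 - 2 * n = 0 by omega,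
      pow_zero, mul_one]
  set S := ((Ioc 0 (2 * n)).erase (2 * n)).erase (n - 1)
  have hsplit : B = (16 ^ k : ℂ) • (toeplitzUnit ℂ n (n - 1) + toeplitzUnit ℂ n (2 * n)) +
      ∑ d ∈ S, c d • toeplitzUnit ℂ n d := by
    rw [eq_sum_smul_toeplitzUnit ℂ n hB,
      ← add_sum_erase _ _ (by simp only [mem_Ioc]; omega : 2 * n ∈ Ioc 0 (2 * n)),
      ← add_sum_erase _ _ (by simp only [mem_erase, mem_Ioc]; omega : n - 1 ∈ (Ioc 0 (2 * n)).erase (2 * n)),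
      hc1, hc2, smul_add]
    abel
  have hr : ∑ d ∈ S, ‖c d‖ < 2 / 3 * 16 ^ k := sum_norm_erase_spikes_lt hspike hramp hk hn
  have h16 : (0 : ℝ) < 16 ^ k := by positivity
  have hbounds := hH.eigenvalues_mem_Icc_of_eq_smul_add hsplit
    (norm_conjTranspose_toeplitzUnit_add_mulVec n)
    (norm_conjTranspose_sum_smul_mulVec_le S c _ (norm_conjTranspose_toeplitzUnit_mulVec_le n))
    (by rw [norm_pow, Complex.norm_ofNat]; linarith)
  intro i j
  obtain ⟨-, hi⟩ := hbounds i
  obtain ⟨hj, -⟩ := hbounds j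
  simp only [norm_pow, Complex.norm_ofNat] at hi hj
  have hr0 : 0 ≤ ∑ d ∈ S, ‖c d‖ := sum_nonneg fun _ _ => norm_nonneg _
  nlinarith [mul_pos (by linarith : (0 : ℝ) < 4 * 16 ^ k - 6 * ∑ d ∈ S, ‖c d‖)
    (by linarith : (0 : ℝ) < 6 * 16 ^ k - 4 * ∑ d ∈ S, ‖c d‖)]

/-- For fixed `k ≥ 2` and `n = n_k = 2^k − 2`, any two eigenvalues `λ, μ` of
the Hermitian matrix `B_n B_nᴴ` satisfy `λ < 25·μ`; equivalently
`σ₁(B_n) < 5·σ_n(B_n)`, so the spectral condition number of `B_n` is smaller than 5. -/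
theorem stmt_14 (z c : ℕ → ℂ)
    (hz : ∀ k, 2 ≤ k → 0 < ‖z k‖ ∧ ‖z k‖ < 1 / 3)
    (hc0 : c 0 = 1)
    (hck : ∀ k, 2 ≤ k → c (2 ^ k - 3) = 16 ^ k)
    (hcj : ∀ k, 2 ≤ k → ∀ j, 2 ^ k - 2 ≤ j → j ≤ 2 ^ (k + 1) - 4 →
      c j = 16 ^ k * z k ^ (2 ^ (k + 1) - 4 - j))
    (k n : ℕ) (hk : 2 ≤ k) (hn : n = 2 ^ k - 2)
    (B : Matrix (Fin n) (Fin (n + 1)) ℂ)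
    (hB : ∀ i j, B i j = c (n + (i : ℕ) + 1 - (j : ℕ)))
    (hH : (B * B.conjTranspose).IsHermitian) :
    ∀ i j : Fin n, hH.eigenvalues i < 25 * hH.eigenvalues j :=
  stmt_14_general z c hz hck hcj k n hk hn B hB hH
end
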